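/- arXiv:1512.08287 — 2 statements merged into one kernel-verified Lean document; each statement's English description precedes it below -/
import Mathlib

section
/- Let $R_0$ be a commutative Noetherian domain, $\mathfrak{f} \geq 4$, $R = R_0[x_{i,j} : 1 \le i < j \le \mathfrak{f}]$, $\mathbf{X}$ the generic alternating matrix, and $I_\lambda = \operatorname{Pf}_4(\mathbf{X}) + (x_{i,j} : 1 \le i < j \le \lambda)$ for $1 \le \lambda \le \mathfrak{f}-1$. Then $I_\lambda$ is a prime ideal of $R$. -/
set_option maxHeartbeats 1000000


open CategoryTheory

noncomputable section
namespace AluffiStmt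

universe u

/-- The index set for the entries of a generic `f × f` alternating matrix:
pairs `(i, j)` with `i < j`. -/
abbrev P2 (f : ℕ) := {p : Fin f × Fin f // p.1 < p.2}

/-- `l` is a (weakly) regular sequence on `R`: each entry is a nonzerodivisor
modulo the ideal generated by the previous entries. -/
def IsRegSeq (R : Type*) [CommRing R] (l : List R) : Prop :=
  ∀ (i : ℕ) (h : i < l.length) (x : R),
    l.get ⟨i, h⟩ * x ∈ Ideal.span {y | y ∈ l.take i} →
      x ∈ Ideal.span {y | y ∈ l.take i}

/-- The grade of an ideal: the supremum of lengths of regular sequences on `R`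
contained in `I`. -/
def grade {R : Type*} [CommRing R] (I : Ideal R) : ℕ :=
  sSup {n | ∃ l : List R, l.length = n ∧ (∀ r ∈ l, r ∈ I) ∧ IsRegSeq R l}

/-- Projective dimension at most `n`, expressed by vanishing of `Ext^i (M, -)`
for all `i > n`. -/
def projDimLE (R : Type u) [CommRing R] (M : ModuleCat.{u} R) (n : ℕ) : Prop :=
  ∀ (N : ModuleCat.{u} R) (i : ℕ), n < i →
    Subsingleton (((Ext R (ModuleCat.{u} R) i).obj (Opposite.op M)).obj N)

/-- `M` has projective dimension exactly `n`. -/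
def projDimEq (R : Type u) [CommRing R] (M : ModuleCat.{u} R) (n : ℕ) : Prop :=
  projDimLE R M n ∧ ∀ k : ℕ, projDimLE R M k → n ≤ k

/-- An ideal `I` is perfect if `grade I = pd_R (R/I)`. -/
def IsPerfectIdeal (R : Type u) [CommRing R] (I : Ideal R) : Prop :=
  projDimEq R (ModuleCat.of R (R ⧸ I)) (grade I)
/-- The `(i,j)` entry of the generic alternating matrix `X`. -/
def xv (R₀ : Type u) [CommRing R₀] (f : ℕ) (i j : Fin f) : MvPolynomial (P2 f) R₀ :=
  if h : i < j then MvPolynomial.X ⟨(i, j), h⟩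
  else if h : j < i then - MvPolynomial.X ⟨(j, i), h⟩ else 0

/-- The Pfaffian of the principal `4 × 4` submatrix of `X` with rows and
columns `i < j < k < l`. -/
def pf4 (R₀ : Type u) [CommRing R₀] (f : ℕ) (i j k l : Fin f) : MvPolynomial (P2 f) R₀ :=
  xv R₀ f i j * xv R₀ f k l - xv R₀ f i k * xv R₀ f j l + xv R₀ f i l * xv R₀ f j k

/-- The ideal `Pf₄(X)` generated by all `4 × 4` principal Pfaffians of the
generic alternating matrix `X`. -/
def Pf4 (R₀ : Type u) [CommRing R₀] (f : ℕ) : Ideal (MvPolynomial (P2 f) R₀) :=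
  Ideal.span {p | ∃ i j k l : Fin f, i < j ∧ j < k ∧ k < l ∧ p = pf4 R₀ f i j k l}

/-- The Schubert-variety ideal `I_λ = Pf₄(X) + (x_{i,j} : 1 ≤ i < j ≤ λ)`
(here `Fin f` is 0-indexed, so the side condition `j ≤ λ` reads `(j : ℕ) < λ`). -/
def Ilam (R₀ : Type u) [CommRing R₀] (f l : ℕ) : Ideal (MvPolynomial (P2 f) R₀) :=
  Pf4 R₀ f + Ideal.span {p | ∃ i j : Fin f, i < j ∧ (j : ℕ) < l ∧ p = xv R₀ f i j}

section Aux
open MvPolynomial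
variable {R₀ : Type u} [CommRing R₀] {f l : ℕ}

def MC (p : MvPolynomial ((Fin f) ⊕ₗ (Fin f)) R₀) (a : ((Fin f) ⊕ₗ (Fin f)) →₀ ℕ) (c : R₀) : Prop :=
  (∀ σ, p.coeff σ ≠ 0 → toLex σ ≤ toLex a) ∧ p.coeff a = c

lemma MC.one : MC (1 : MvPolynomial ((Fin f) ⊕ₗ (Fin f)) R₀) 0 1 := by
  constructor
  · intro σ hσ
    rw [MvPolynomial.coeff_one] at hσ
    rcases eq_or_ne σ 0 with h | h
    · simp [h]
    · simp [Ne.symm h] at hσ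
  · simp [MvPolynomial.coeff_one]

lemma MC.mul {p q : MvPolynomial ((Fin f) ⊕ₗ (Fin f)) R₀} {a b : ((Fin f) ⊕ₗ (Fin f)) →₀ ℕ}
    {c d : R₀} (hp : MC p a c) (hq : MC q b d) : MC (p * q) (a + b) (c * d) := by
  have key : ∀ x : (((Fin f) ⊕ₗ (Fin f)) →₀ ℕ) × (((Fin f) ⊕ₗ (Fin f)) →₀ ℕ),
      x.1 + x.2 = a + b → x ≠ (a, b) → p.coeff x.1 * q.coeff x.2 = 0 := by
    rintro ⟨x1, x2⟩ hsum hne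
    by_contra h
    have h1 : p.coeff x1 ≠ 0 := left_ne_zero_of_mul h
    have h2 : q.coeff x2 ≠ 0 := right_ne_zero_of_mul h
    have le1 : toLex x1 ≤ toLex a := hp.1 _ h1
    have le2 : toLex x2 ≤ toLex b := hq.1 _ h2
    have heq : toLex x1 + toLex x2 = toLex a + toLex b := congrArg toLex hsum
    have e1 : toLex x1 = toLex a := by
      rcases le1.lt_or_eq with h' | h'
      · exact absurd heq (ne_of_lt (add_lt_add_of_lt_of_le h' le2))
      · exact h'
    have e2 : toLex x2 = toLex b := by
      have := heq
      rw [e1] at this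
      exact add_left_cancel this
    exact hne (Prod.ext (toLex.injective e1) (toLex.injective e2))
  constructor
  · intro σ hσ
    rw [MvPolynomial.coeff_mul] at hσ
    obtain ⟨x, hx, hne⟩ := Finset.exists_ne_zero_of_sum_ne_zero hσ
    have h1 : p.coeff x.1 ≠ 0 := left_ne_zero_of_mul hne
    have h2 : q.coeff x.2 ≠ 0 := right_ne_zero_of_mul hne
    have hs : x.1 + x.2 = σ := Finset.HasAntidiagonal.mem_antidiagonal.mp hx
    calc toLex σ = toLex x.1 + toLex x.2 := by rw [← hs]; rfl
    _ ≤ toLex a + toLex b := add_le_add (hp.1 _ h1) (hq.1 _ h2)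
    _ = toLex (a + b) := rfl
  · rw [MvPolynomial.coeff_mul]
    have hmem : ((a, b) : (((Fin f) ⊕ₗ (Fin f)) →₀ ℕ) × _) ∈ Finset.HasAntidiagonal.antidiagonal (a + b) :=
      Finset.HasAntidiagonal.mem_antidiagonal.mpr rfl
    rw [Finset.sum_eq_single_of_mem (a, b) hmem
      (fun x hx hne => key x (Finset.HasAntidiagonal.mem_antidiagonal.mp hx) hne), hp.2, hq.2]

lemma MC.pow {p : MvPolynomial ((Fin f) ⊕ₗ (Fin f)) R₀} {a : ((Fin f) ⊕ₗ (Fin f)) →₀ ℕ} {c : R₀}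
    (hp : MC p a c) (k : ℕ) : MC (p ^ k) (k • a) (c ^ k) := by
  induction k with
  | zero => simpa using MC.one
  | succ n ih =>
      have := ih.mul hp
      simpa [pow_succ, succ_nsmul] using this

lemma MC.prod {ι : Type*} {s : Finset ι} {p : ι → MvPolynomial ((Fin f) ⊕ₗ (Fin f)) R₀}
    {a : ι → ((Fin f) ⊕ₗ (Fin f)) →₀ ℕ} {c : ι → R₀}
    (h : ∀ i ∈ s, MC (p i) (a i) (c i)) :
    MC (∏ i ∈ s, p i) (∑ i ∈ s, a i) (∏ i ∈ s, c i) := by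
  classical
  induction s using Finset.induction_on with
  | empty => simpa using MC.one
  | insert _ _ hx ih =>
      rename_i x s
      rw [Finset.prod_insert hx, Finset.sum_insert hx, Finset.prod_insert hx]
      exact (h x (Finset.mem_insert_self x s)).mul (ih fun i hi => h i (Finset.mem_insert_of_mem hi))

def sv (l : ℕ) (a : Fin f) : MvPolynomial ((Fin f) ⊕ₗ (Fin f)) R₀ :=
  if (a:ℕ) < l then 0 else MvPolynomial.X (toLex (Sum.inr a))
def tv (a : Fin f) : MvPolynomial ((Fin f) ⊕ₗ (Fin f)) R₀ := MvPolynomial.X (toLex (Sum.inl a))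
def g (l : ℕ) (v : P2 f) : MvPolynomial ((Fin f) ⊕ₗ (Fin f)) R₀ :=
  sv l v.1.1 * tv v.1.2 - sv l v.1.2 * tv v.1.1

def tauv (v : P2 f) : ((Fin f) ⊕ₗ (Fin f)) →₀ ℕ :=
  Finsupp.single (toLex (Sum.inl v.1.1)) 1 + Finsupp.single (toLex (Sum.inr v.1.2)) 1

lemma XX (a b : (Fin f) ⊕ₗ (Fin f)) :
    (X a * X b : MvPolynomial ((Fin f) ⊕ₗ (Fin f)) R₀)
      = monomial (Finsupp.single a 1 + Finsupp.single b 1) 1 := by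
  rw [X, X, monomial_mul, one_mul]

lemma lex_lt_of {κ : Type*} [LinearOrder κ] {σ τ : κ →₀ ℕ} (i : κ)
    (h1 : ∀ j < i, σ j = τ j) (h2 : σ i < τ i) : toLex σ < toLex τ :=
  Finsupp.Lex.lt_iff.mpr ⟨i, h1, h2⟩

lemma pair_apply (x y j : (Fin f) ⊕ₗ (Fin f)) :
    (Finsupp.single x 1 + Finsupp.single y 1 : _ →₀ ℕ) j
      = (if x = j then 1 else 0) + (if y = j then 1 else 0) := by
  rw [Finsupp.add_apply, Finsupp.single_apply, Finsupp.single_apply]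

lemma ne_help {x y : Fin f ⊕ Fin f} (h : x ≠ y) :
    (toLex x : (Fin f) ⊕ₗ (Fin f)) ≠ toLex y := fun hh => h (toLex.injective hh)

lemma lt_tauv (v : P2 f) :
    toLex (Finsupp.single (toLex (Sum.inl v.1.2)) 1 + Finsupp.single (toLex (Sum.inr v.1.1)) 1)
      < toLex (tauv v) := by
  apply lex_lt_of (toLex (Sum.inl v.1.1))
  · intro j hj
    rcases j with a | a
    · have ha : a < v.1.1 := (Sum.Lex.inl_lt_inl_iff (α := Fin f) (β := Fin f)).mp hj
      have e1 : (Finsupp.single (toLex (Sum.inl v.1.2)) 1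
          + Finsupp.single (toLex (Sum.inr v.1.1)) 1 : _ →₀ ℕ) (toLex (Sum.inl a)) = 0 := by
        rw [pair_apply, if_neg (ne_help (by simp [((ha.trans v.2).ne).symm])),
          if_neg (ne_help (by simp))]
      have e2 : (tauv v) (toLex (Sum.inl a)) = 0 := by
        rw [tauv, pair_apply, if_neg (ne_help (by simp [ha.ne.symm])), if_neg (ne_help (by simp))]
      exact e1.trans e2.symm
    · exact absurd hj Sum.Lex.not_inr_lt_inl
  · have e1 : (Finsupp.single (toLex (Sum.inl v.1.2)) 1
        + Finsupp.single (toLex (Sum.inr v.1.1)) 1 : _ →₀ ℕ) (toLex (Sum.inl v.1.1)) = 0 := by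
      rw [pair_apply, if_neg (ne_help (by simp [v.2.ne'])), if_neg (ne_help (by simp))]
    have e2 : (tauv v) (toLex (Sum.inl v.1.1)) = 1 := by
      rw [tauv, pair_apply, if_pos rfl, if_neg (ne_help (by simp))]
    rw [e1, e2]
    norm_num

lemma MC_monomial' {m : ((Fin f) ⊕ₗ (Fin f)) →₀ ℕ} {c : R₀} :
    MC (monomial m c) m c := by
  constructor
  · intro σ hσ
    rw [coeff_monomial] at hσ
    rcases eq_or_ne m σ with h | h
    · exact le_of_eq (congrArg toLex h.symm)
    · simp [h] at hσ
  · rw [coeff_monomial, if_pos rfl]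

lemma MC_g (v : P2 f) (hv : l ≤ (v.1.2 : ℕ)) : MC (g l v) (tauv v) (-1 : R₀) := by
  have hsvj : (sv l v.1.2 : MvPolynomial ((Fin f) ⊕ₗ (Fin f)) R₀)
      = MvPolynomial.X (toLex (Sum.inr v.1.2)) := by
    rw [sv, if_neg (not_lt.mpr hv)]
  have hcomm : Finsupp.single (toLex (Sum.inr (v.1.2 : Fin f))) 1
      + Finsupp.single (toLex (Sum.inl v.1.1)) (1:ℕ) = tauv v := by
    rw [tauv, add_comm]
  by_cases hi : (v.1.1 : ℕ) < l
  · have hgv : g l v = monomial (tauv v) (-1 : R₀) := by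
      rw [g, sv, if_pos hi, hsvj, zero_mul, zero_sub, tv, XX, hcomm]
      exact (map_neg (monomial (tauv v)) 1).symm.trans (by norm_num)
    rw [hgv]
    exact MC_monomial'
  · have hcomm2 : Finsupp.single (toLex (Sum.inr (v.1.1 : Fin f))) 1
        + Finsupp.single (toLex (Sum.inl v.1.2)) (1:ℕ)
        = Finsupp.single (toLex (Sum.inl v.1.2)) 1
          + Finsupp.single (toLex (Sum.inr v.1.1)) 1 := add_comm _ _
    have hgv : g l v = monomial
        (Finsupp.single (toLex (Sum.inl v.1.2)) 1 + Finsupp.single (toLex (Sum.inr v.1.1)) 1)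
        (1 : R₀) + monomial (tauv v) (-1 : R₀) := by
      rw [g, sv, if_neg hi, hsvj, tv, tv, XX, XX, hcomm, hcomm2, sub_eq_add_neg]
      congr 1
      exact (map_neg (monomial (tauv v)) 1).symm.trans (by norm_num)
    have hne : (Finsupp.single (toLex (Sum.inl v.1.2)) 1
        + Finsupp.single (toLex (Sum.inr v.1.1)) 1 : _ →₀ ℕ) ≠ tauv v :=
      fun h => (lt_tauv v).ne (congrArg toLex h)
    constructor
    · intro σ hσ
      rw [hgv, coeff_add, coeff_monomial, coeff_monomial] at hσ
      by_cases h1 : σ = Finsupp.single (toLex (Sum.inl v.1.2)) 1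
          + Finsupp.single (toLex (Sum.inr v.1.1)) 1
      · rw [h1]; exact (lt_tauv v).le
      · by_cases h2 : σ = tauv v
        · exact le_of_eq (congrArg toLex h2)
        · rw [if_neg (fun h => h1 h.symm), if_neg (fun h => h2 h.symm)] at hσ
          simp at hσ
    · rw [hgv, coeff_add, coeff_monomial, coeff_monomial, if_neg hne, if_pos rfl, zero_add]

def tau (σ : (P2 f) →₀ ℕ) : ((Fin f) ⊕ₗ (Fin f)) →₀ ℕ := σ.sum fun v k => k • tauv v

def Surv (l : ℕ) (σ : (P2 f) →₀ ℕ) : Prop := ∀ v ∈ σ.support, l ≤ (v.1.2 : ℕ)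

def Std (σ : (P2 f) →₀ ℕ) : Prop := ∀ v ∈ σ.support, ∀ w ∈ σ.support,
  (v.1.1 ≤ w.1.1 ∧ v.1.2 ≤ w.1.2) ∨ (w.1.1 ≤ v.1.1 ∧ w.1.2 ≤ v.1.2)

lemma MC_phi_monomial {σ : (P2 f) →₀ ℕ} (hσ : Surv l σ) :
    MC (MvPolynomial.aeval (g l) (monomial σ (1:R₀))) (tau σ)
      (∏ v ∈ σ.support, (-1:R₀) ^ σ v) := by
  rw [aeval_monomial, map_one, one_mul]
  have h := MC.prod (s := σ.support) (p := fun v => (g l v) ^ (σ v))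
    (a := fun v => σ v • tauv v) (c := fun v => (-1:R₀) ^ (σ v))
    (fun v hv => (MC_g v (hσ v hv)).pow (σ v))
  rw [Finsupp.prod, tau, Finsupp.sum]
  exact h

lemma isUnit_sign {σ : (P2 f) →₀ ℕ} : IsUnit (∏ v ∈ σ.support, (-1:R₀) ^ σ v) := by
  rw [Finset.prod_pow_eq_pow_sum]
  exact (isUnit_one.neg).pow _

def Tcnt (σ : (P2 f) →₀ ℕ) (a : Fin f) : ℕ := σ.sum fun v k => if v.1.1 = a then k else 0
def Scnt (σ : (P2 f) →₀ ℕ) (a : Fin f) : ℕ := σ.sum fun v k => if v.1.2 = a then k else 0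

lemma tau_apply_inl (σ : (P2 f) →₀ ℕ) (a : Fin f) :
    tau σ (toLex (Sum.inl a)) = Tcnt σ a := by
  rw [tau, Finsupp.sum, Finsupp.finset_sum_apply, Tcnt, Finsupp.sum]
  refine Finset.sum_congr rfl fun v _ => ?_
  rw [Finsupp.smul_apply, smul_eq_mul, tauv, pair_apply]
  by_cases h : v.1.1 = a
  · rw [if_pos (by rw [h]), if_neg (ne_help (by simp)), if_pos h]
    ring
  · rw [if_neg (ne_help (by simp [h])), if_neg (ne_help (by simp)), if_neg h]
    ring

lemma tau_apply_inr (σ : (P2 f) →₀ ℕ) (a : Fin f) :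
    tau σ (toLex (Sum.inr a)) = Scnt σ a := by
  rw [tau, Finsupp.sum, Finsupp.finset_sum_apply, Scnt, Finsupp.sum]
  refine Finset.sum_congr rfl fun v _ => ?_
  rw [Finsupp.smul_apply, smul_eq_mul, tauv, pair_apply]
  by_cases h : v.1.2 = a
  · rw [if_neg (ne_help (by simp)), if_pos (by rw [h]), if_pos h]
    ring
  · rw [if_neg (ne_help (by simp)), if_neg (ne_help (by simp [h])), if_neg h]
    ring

lemma Tcnt_add (σ τ : (P2 f) →₀ ℕ) (a : Fin f) :
    Tcnt (σ + τ) a = Tcnt σ a + Tcnt τ a := by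
  rw [Tcnt, Tcnt, Tcnt, Finsupp.sum_add_index']
  · intro v; simp
  · intro v k1 k2; split <;> simp

lemma Scnt_add (σ τ : (P2 f) →₀ ℕ) (a : Fin f) :
    Scnt (σ + τ) a = Scnt σ a + Scnt τ a := by
  rw [Scnt, Scnt, Scnt, Finsupp.sum_add_index']
  · intro v; simp
  · intro v k1 k2; split <;> simp

lemma Tcnt_eq_zero_iff (σ : (P2 f) →₀ ℕ) (a : Fin f) :
    Tcnt σ a = 0 ↔ ∀ v ∈ σ.support, v.1.1 ≠ a := by
  rw [Tcnt, Finsupp.sum, Finset.sum_eq_zero_iff]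
  constructor
  · intro h v hv hva
    have := h v hv
    rw [if_pos hva] at this
    exact (Finsupp.mem_support_iff.mp hv) this
  · intro h v hv
    rw [if_neg (h v hv)]

lemma Scnt_eq_zero_iff (σ : (P2 f) →₀ ℕ) (a : Fin f) :
    Scnt σ a = 0 ↔ ∀ v ∈ σ.support, v.1.2 ≠ a := by
  rw [Scnt, Finsupp.sum, Finset.sum_eq_zero_iff]
  constructor
  · intro h v hv hva
    have := h v hv
    rw [if_pos hva] at this
    exact (Finsupp.mem_support_iff.mp hv) this
  · intro h v hv
    rw [if_neg (h v hv)]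

def Fsts (σ : (P2 f) →₀ ℕ) : Finset (Fin f) := σ.support.image fun v => v.1.1
def Snds (σ : (P2 f) →₀ ℕ) : Finset (Fin f) := σ.support.image fun v => v.1.2

lemma mem_Fsts_iff (σ : (P2 f) →₀ ℕ) (a : Fin f) : a ∈ Fsts σ ↔ Tcnt σ a ≠ 0 := by
  rw [Fsts, Finset.mem_image, ne_eq, Tcnt_eq_zero_iff]
  push_neg
  constructor
  · rintro ⟨v, hv, h⟩; exact ⟨v, hv, h⟩
  · rintro ⟨v, hv, h⟩; exact ⟨v, hv, h⟩

lemma mem_Snds_iff (σ : (P2 f) →₀ ℕ) (a : Fin f) : a ∈ Snds σ ↔ Scnt σ a ≠ 0 := by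
  rw [Snds, Finset.mem_image, ne_eq, Scnt_eq_zero_iff]
  push_neg
  constructor
  · rintro ⟨v, hv, h⟩; exact ⟨v, hv, h⟩
  · rintro ⟨v, hv, h⟩; exact ⟨v, hv, h⟩

lemma exists_min_pair {σ : (P2 f) →₀ ℕ} (hσ : σ ≠ 0) (hs : Std σ)
    (h1 : (Fsts σ).Nonempty) (h2 : (Snds σ).Nonempty) :
    ∃ v ∈ σ.support, v.1.1 = (Fsts σ).min' h1 ∧ v.1.2 = (Snds σ).min' h2 := by
  obtain ⟨u, hu, hu1⟩ := Finset.mem_image.mp ((Fsts σ).min'_mem h1)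
  obtain ⟨w, hw, hw1⟩ := Finset.mem_image.mp ((Snds σ).min'_mem h2)
  rcases hs u hu w hw with ⟨ha, hb⟩ | ⟨ha, hb⟩
  · refine ⟨u, hu, hu1, le_antisymm (hb.trans hw1.le) ?_⟩
    exact (Snds σ).min'_le _ (Finset.mem_image.mpr ⟨u, hu, rfl⟩)
  · refine ⟨w, hw, le_antisymm (ha.trans hu1.le) ?_, hw1⟩
    exact (Fsts σ).min'_le _ (Finset.mem_image.mpr ⟨w, hw, rfl⟩)

def deg (σ : (P2 f) →₀ ℕ) : ℕ := σ.sum fun _ k => k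

lemma deg_add (σ τ : (P2 f) →₀ ℕ) : deg (σ + τ) = deg σ + deg τ := by
  rw [deg, deg, deg, Finsupp.sum_add_index'] <;> simp

lemma single_le_of_mem {σ : (P2 f) →₀ ℕ} {v : P2 f} (hv : v ∈ σ.support) :
    Finsupp.single v 1 ≤ σ := by
  rw [Finsupp.single_le_iff]
  exact Nat.one_le_iff_ne_zero.mpr (Finsupp.mem_support_iff.mp hv)

lemma counts_inj : ∀ (n : ℕ) (σ σ' : (P2 f) →₀ ℕ), deg σ = n → Std σ → Std σ' →
    (∀ a, Tcnt σ a = Tcnt σ' a) → (∀ a, Scnt σ a = Scnt σ' a) → σ = σ' := by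
  intro n
  induction n using Nat.strong_induction_on with
  | _ n ih =>
    intro σ σ' hdeg hs hs' hT hS
    by_cases h0 : σ = 0
    · subst h0
      by_contra hne
      obtain ⟨v, hv⟩ := Finsupp.support_nonempty_iff.mpr (fun h => hne h.symm)
      have : Tcnt σ' v.1.1 ≠ 0 := (mem_Fsts_iff _ _).mp (Finset.mem_image.mpr ⟨v, hv, rfl⟩)
      exact this (by rw [← hT]; simp [Tcnt, Finsupp.sum_zero_index])
    · by_cases h0' : σ' = 0
      · subst h0'
        obtain ⟨v, hv⟩ := Finsupp.support_nonempty_iff.mpr h0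
        have : Tcnt σ v.1.1 ≠ 0 := (mem_Fsts_iff _ _).mp (Finset.mem_image.mpr ⟨v, hv, rfl⟩)
        exact absurd (by rw [hT]; simp [Tcnt, Finsupp.sum_zero_index]) this
      · have hF : Fsts σ = Fsts σ' := by
          ext a
          rw [mem_Fsts_iff, mem_Fsts_iff, hT]
        have hSn : Snds σ = Snds σ' := by
          ext a
          rw [mem_Snds_iff, mem_Snds_iff, hS]
        have h1 : (Fsts σ).Nonempty := by
          obtain ⟨v, hv⟩ := Finsupp.support_nonempty_iff.mpr h0
          exact ⟨v.1.1, Finset.mem_image.mpr ⟨v, hv, rfl⟩⟩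
        have h2 : (Snds σ).Nonempty := by
          obtain ⟨v, hv⟩ := Finsupp.support_nonempty_iff.mpr h0
          exact ⟨v.1.2, Finset.mem_image.mpr ⟨v, hv, rfl⟩⟩
        have h1' : (Fsts σ').Nonempty := hF ▸ h1
        have h2' : (Snds σ').Nonempty := hSn ▸ h2
        obtain ⟨v, hv, hv1, hv2⟩ := exists_min_pair h0 hs h1 h2
        obtain ⟨v', hv', hv1', hv2'⟩ := exists_min_pair h0' hs' h1' h2'
        have hmin1 : (Fsts σ).min' h1 = (Fsts σ').min' h1' := by
          apply le_antisymm
          · exact Finset.min'_le _ _ (by rw [hF]; exact Finset.min'_mem _ _)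
          · exact Finset.min'_le _ _ (by rw [← hF]; exact Finset.min'_mem _ _)
        have hmin2 : (Snds σ).min' h2 = (Snds σ').min' h2' := by
          apply le_antisymm
          · exact Finset.min'_le _ _ (by rw [hSn]; exact Finset.min'_mem _ _)
          · exact Finset.min'_le _ _ (by rw [← hSn]; exact Finset.min'_mem _ _)
        have hvv : v = v' := by
          apply Subtype.ext
          apply Prod.ext
          · rw [hv1, hv1', hmin1]
          · rw [hv2, hv2', hmin2]
        subst hvv
        have hdecomp : σ = (σ - Finsupp.single v 1) + Finsupp.single v 1 :=
          (tsub_add_cancel_of_le (single_le_of_mem hv)).symm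
        have hdecomp' : σ' = (σ' - Finsupp.single v 1) + Finsupp.single v 1 :=
          (tsub_add_cancel_of_le (single_le_of_mem hv')).symm
        have hsub : (σ - Finsupp.single v 1) = (σ' - Finsupp.single v 1) := by
          have hstd1 : Std (σ - Finsupp.single v 1) := fun x hx y hy =>
            hs x (Finsupp.support_tsub hx) y (Finsupp.support_tsub hy)
          have hstd1' : Std (σ' - Finsupp.single v 1) := fun x hx y hy =>
            hs' x (Finsupp.support_tsub hx) y (Finsupp.support_tsub hy)
          have hdeg1 : deg (σ - Finsupp.single v 1) < n := by
            have : deg σ = deg (σ - Finsupp.single v 1) + deg (Finsupp.single v 1) := by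
              rw [← deg_add, ← hdecomp]
            have hone : deg (Finsupp.single v (1:ℕ)) = 1 := by
              rw [deg, Finsupp.sum_single_index]; rfl
            omega
          refine ih _ hdeg1 _ _ rfl hstd1 hstd1' (fun a => ?_) (fun a => ?_)
          · have := hT a
            rw [hdecomp, hdecomp', Tcnt_add, Tcnt_add] at this
            omega
          · have := hS a
            rw [hdecomp, hdecomp', Scnt_add, Scnt_add] at this
            omega
        rw [hdecomp, hdecomp', hsub]

lemma tau_inj {σ σ' : (P2 f) →₀ ℕ} (hs : Std σ) (hs' : Std σ') (h : tau σ = tau σ') :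
    σ = σ' := by
  refine counts_inj (deg σ) σ σ' rfl hs hs' (fun a => ?_) (fun a => ?_)
  · rw [← tau_apply_inl, ← tau_apply_inl, h]
  · rw [← tau_apply_inr, ← tau_apply_inr, h]

lemma indep {q : MvPolynomial (P2 f) R₀}
    (hq : ∀ ρ ∈ q.support, Std ρ ∧ Surv l ρ)
    (h0 : MvPolynomial.aeval (g l) q = (0 : MvPolynomial ((Fin f) ⊕ₗ (Fin f)) R₀)) :
    q = 0 := by
  by_contra hne
  have hsupp : q.support.Nonempty := by
    rw [Finset.nonempty_iff_ne_empty]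
    intro h
    exact hne (MvPolynomial.support_eq_empty.mp h)
  set A : Finset (Lex (((Fin f) ⊕ₗ (Fin f)) →₀ ℕ)) :=
    q.support.image (fun σ => toLex (tau σ)) with hA
  have hAne : A.Nonempty := hsupp.image _
  obtain ⟨σ₀, hσ₀, hmax⟩ := Finset.mem_image.mp (A.max'_mem hAne)
  have hq0 : q = ∑ σ ∈ q.support, monomial σ (q.coeff σ) :=
    (support_sum_monomial_coeff q).symm
  have hcoeff : MvPolynomial.coeff (tau σ₀) (MvPolynomial.aeval (g l) q)
      = q.coeff σ₀ * (∏ v ∈ σ₀.support, (-1:R₀) ^ σ₀ v) := by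
    conv_lhs => rw [hq0]
    rw [map_sum, MvPolynomial.coeff_sum]
    have hterm : ∀ σ ∈ q.support,
        MvPolynomial.coeff (tau σ₀) (MvPolynomial.aeval (g l) (monomial σ (q.coeff σ)))
          = q.coeff σ * MvPolynomial.coeff (tau σ₀)
              (MvPolynomial.aeval (g l) (monomial σ (1:R₀))) := by
      intro σ _
      have hmono : (monomial σ (q.coeff σ) : MvPolynomial (P2 f) R₀)
          = q.coeff σ • monomial σ (1:R₀) := by
        rw [MvPolynomial.smul_monomial, smul_eq_mul, mul_one]
      rw [hmono, map_smul, MvPolynomial.coeff_smul, smul_eq_mul]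
    rw [Finset.sum_congr rfl hterm, Finset.sum_eq_single σ₀ ?h1 ?h2]
    case h1 =>
      intro σ hσ hneσ
      have hMC := @MC_phi_monomial R₀ _ f l σ (hq σ hσ).2
      have hz : MvPolynomial.coeff (tau σ₀)
          (MvPolynomial.aeval (g (R₀ := R₀) l) (monomial σ (1:R₀))) = 0 := by
        by_contra h
        have hle : toLex (tau σ₀) ≤ toLex (tau σ) := hMC.1 (tau σ₀) h
        have hle2 : toLex (tau σ) ≤ toLex (tau σ₀) := by
          rw [hmax]
          exact A.le_max' _ (Finset.mem_image.mpr ⟨σ, hσ, rfl⟩)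
        have heq : tau σ = tau σ₀ := toLex.injective (le_antisymm hle2 hle)
        exact hneσ (tau_inj (hq σ hσ).1 (hq σ₀ hσ₀).1 heq)
      rw [hz, mul_zero]
    case h2 =>
      intro h
      exact absurd hσ₀ h
    · have hMC := @MC_phi_monomial R₀ _ f l σ₀ (hq σ₀ hσ₀).2
      rw [hMC.2]
  rw [h0] at hcoeff
  simp only [MvPolynomial.coeff_zero] at hcoeff
  have hu : IsUnit (∏ v ∈ σ₀.support, (-1:R₀) ^ σ₀ v) := isUnit_sign
  have : q.coeff σ₀ = 0 := by
    rcases hu with ⟨u, hu⟩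
    have := hcoeff.symm
    rw [← hu] at this
    calc q.coeff σ₀ = q.coeff σ₀ * ↑u * ↑u⁻¹ := by
          rw [mul_assoc, ← Units.val_mul, mul_inv_cancel, Units.val_one, mul_one]
    _ = 0 := by rw [this, zero_mul]
  exact (Finsupp.mem_support_iff.mp hσ₀) this

def gap (v : P2 f) : ℕ := ((v.1.2 : ℕ) - (v.1.1 : ℕ)) ^ 2

def mu (σ : (P2 f) →₀ ℕ) : ℕ := σ.sum fun v k => k * gap v

lemma mu_add (σ τ : (P2 f) →₀ ℕ) : mu (σ + τ) = mu σ + mu τ := by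
  rw [mu, mu, mu, Finsupp.sum_add_index']
  · intro v; simp
  · intro v k1 k2; ring

lemma mu_single (v : P2 f) : mu (Finsupp.single v 1) = gap v := by
  rw [mu, Finsupp.sum_single_index] <;> simp

lemma gap_ineq {a c d b : ℕ} (h1 : a < c) (h2 : c < d) (h3 : d < b) :
    (d - a)^2 + (b - c)^2 < (b - a)^2 + (d - c)^2
    ∧ (c - a)^2 + (b - d)^2 < (b - a)^2 + (d - c)^2 := by
  have had : a ≤ d := (h1.trans h2).le
  have hcb : c ≤ b := (h2.trans h3).le
  have hab : a ≤ b := had.trans h3.le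
  have hcd : c ≤ d := h2.le
  have hac : a ≤ c := h1.le
  have hdb : d ≤ b := h3.le
  have k1 : (a:ℤ) < (c:ℤ) := by exact_mod_cast h1
  have k2 : (c:ℤ) < (d:ℤ) := by exact_mod_cast h2
  have k3 : (d:ℤ) < (b:ℤ) := by exact_mod_cast h3
  zify [had, hcb, hab, hcd, hac, hdb]
  constructor <;>
    nlinarith [mul_pos (sub_pos.mpr k1) (sub_pos.mpr k3), mul_pos (sub_pos.mpr k2) (sub_pos.mpr k3),
      mul_pos (sub_pos.mpr k1) (sub_pos.mpr k2)]

lemma nonstd_struct {σ : (P2 f) →₀ ℕ} (h : ¬ Std σ) :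
    ∃ (a b c d : Fin f) (hab : a < b) (hcd : c < d),
      a < c ∧ d < b ∧ (⟨(a,b),hab⟩ : P2 f) ∈ σ.support ∧ (⟨(c,d),hcd⟩ : P2 f) ∈ σ.support := by
  rw [Std] at h
  push_neg at h
  obtain ⟨v, hv, w, hw, h1, h2⟩ := h
  rcases le_total v.1.1 w.1.1 with hle | hle
  · have hw12 : w.1.2 < v.1.2 := h1 hle
    have h11 : v.1.1 < w.1.1 := not_le.mp (fun hh => absurd (h2 hh) (not_lt.mpr hw12.le))
    exact ⟨v.1.1, v.1.2, w.1.1, w.1.2, v.2, w.2, h11, hw12, hv, hw⟩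
  · have hv12 : v.1.2 < w.1.2 := h2 hle
    have h11 : w.1.1 < v.1.1 := not_le.mp (fun hh => absurd (h1 hh) (not_lt.mpr hv12.le))
    exact ⟨w.1.1, w.1.2, v.1.1, v.1.2, w.2, v.2, h11, hv12, hw, hv⟩

lemma X_mem_Ilam {v : P2 f} (hv : ((v.1.2 : ℕ) < l)) :
    (MvPolynomial.X v : MvPolynomial (P2 f) R₀) ∈ Ilam R₀ f l := by
  apply Submodule.mem_sup_right
  apply Ideal.subset_span
  exact ⟨v.1.1, v.1.2, v.2, hv, by rw [xv, dif_pos v.2]⟩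

lemma pf4_mem_Ilam {a c d b : Fin f} (h1 : a < c) (h2 : c < d) (h3 : d < b) :
    pf4 R₀ f a c d b ∈ Ilam R₀ f l :=
  Submodule.mem_sup_left (Ideal.subset_span ⟨a, c, d, b, h1, h2, h3, rfl⟩)

lemma monomial_decomp {σ : (P2 f) →₀ ℕ} {v w : P2 f} (hv : v ∈ σ.support) (hw : w ∈ σ.support)
    (hvw : v ≠ w) :
    σ = (σ - Finsupp.single v 1 - Finsupp.single w 1) + Finsupp.single w 1 + Finsupp.single v 1 := by
  have h1 : Finsupp.single v 1 ≤ σ := single_le_of_mem hv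
  have h2 : Finsupp.single w 1 ≤ σ - Finsupp.single v 1 := by
    rw [Finsupp.single_le_iff, Finsupp.tsub_apply, Finsupp.single_apply, if_neg hvw]
    exact Nat.one_le_iff_ne_zero.mpr (Finsupp.mem_support_iff.mp hw)
  rw [tsub_add_cancel_of_le h2, tsub_add_cancel_of_le h1]

lemma straighten : ∀ (n : ℕ) (σ : (P2 f) →₀ ℕ) (r : R₀), mu σ = n →
    ∃ q : MvPolynomial (P2 f) R₀, (∀ ρ ∈ q.support, Std ρ ∧ Surv l ρ) ∧
      monomial σ r - q ∈ Ilam R₀ f l := by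
  intro n
  induction n using Nat.strong_induction_on with
  | _ n ih =>
    intro σ r hmu
    by_cases hsv : Surv l σ
    · by_cases hstd : Std σ
      · refine ⟨monomial σ r, fun ρ hρ => ?_, by rw [sub_self]; exact zero_mem _⟩
        classical
        rw [MvPolynomial.support_monomial] at hρ
        by_cases hr : r = 0
        · rw [if_pos hr] at hρ; exact absurd hρ (Finset.notMem_empty ρ)
        · rw [if_neg hr, Finset.mem_singleton] at hρ; subst hρ; exact ⟨hstd, hsv⟩
      · obtain ⟨a, b, c, d, hab, hcd, hac, hdb, hmab, hmcd⟩ := nonstd_struct hstd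
        set vab : P2 f := ⟨(a,b),hab⟩
        set vcd : P2 f := ⟨(c,d),hcd⟩
        have had : a < d := hac.trans hcd
        have hcb : c < b := hcd.trans hdb
        set vad : P2 f := ⟨(a,d),had⟩
        set vcb : P2 f := ⟨(c,b),hcb⟩
        set vac : P2 f := ⟨(a,c),hac⟩
        set vdb : P2 f := ⟨(d,b),hdb⟩
        have hvw : vab ≠ vcd := fun h => absurd (congrArg (fun x => x.1.1) h) hac.ne
        set σ' := σ - Finsupp.single vab 1 - Finsupp.single vcd 1 with hσ'
        have hdec : σ = σ' + Finsupp.single vcd 1 + Finsupp.single vab 1 :=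
          monomial_decomp hmab hmcd hvw
        set σA := σ' + Finsupp.single vad 1 + Finsupp.single vcb 1 with hσA
        set σB := σ' + Finsupp.single vac 1 + Finsupp.single vdb 1 with hσB
        -- μ comparisons
        have hgap := gap_ineq (a := (a:ℕ)) (c := (c:ℕ)) (d := (d:ℕ)) (b := (b:ℕ))
          hac hcd hdb
        have hmuσ : mu σ = mu σ' + gap vcd + gap vab := by
          rw [hdec, mu_add, mu_add, mu_single, mu_single]
        have hmuA : mu σA < n := by
          rw [hσA, mu_add, mu_add, mu_single, mu_single, ← hmu, hmuσ]
          have : gap vad + gap vcb < gap vcd + gap vab := by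
            simpa [gap, add_comm, vad, vcb, vab, vcd] using hgap.1
          omega
        have hmuB : mu σB < n := by
          rw [hσB, mu_add, mu_add, mu_single, mu_single, ← hmu, hmuσ]
          have : gap vac + gap vdb < gap vcd + gap vab := by
            simpa [gap, add_comm, vac, vdb, vab, vcd] using hgap.2
          omega
        obtain ⟨qA, hqA, hIA⟩ := ih (mu σA) hmuA σA r rfl
        obtain ⟨qB, hqB, hIB⟩ := ih (mu σB) hmuB σB r rfl
        refine ⟨qA - qB, fun ρ hρ => ?_, ?_⟩
        · rw [sub_eq_add_neg] at hρ
          have := MvPolynomial.support_add (p := qA) (q := -qB) hρ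
          rcases Finset.mem_union.mp this with h | h
          · exact hqA ρ h
          · rw [MvPolynomial.support_neg] at h
            exact hqB ρ h
        · -- key algebraic identity
          have hpf : (MvPolynomial.X vab * MvPolynomial.X vcd : MvPolynomial (P2 f) R₀)
              = pf4 R₀ f a c d b - MvPolynomial.X vac * MvPolynomial.X vdb
                + MvPolynomial.X vad * MvPolynomial.X vcb := by
            rw [pf4, xv, dif_pos hac, xv, dif_pos hdb, xv, dif_pos had, xv, dif_pos hcb,
              xv, dif_pos hab, xv, dif_pos hcd]
            ring
          have hmono : (monomial σ r : MvPolynomial (P2 f) R₀)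
              = monomial σ' r * MvPolynomial.X vcd * MvPolynomial.X vab := by
            rw [MvPolynomial.X, MvPolynomial.X, monomial_mul, monomial_mul, mul_one, mul_one,
              ← hdec]
          have hmonoA : (monomial σA r : MvPolynomial (P2 f) R₀)
              = monomial σ' r * MvPolynomial.X vad * MvPolynomial.X vcb := by
            rw [MvPolynomial.X, MvPolynomial.X, monomial_mul, monomial_mul, mul_one, mul_one,
              ← hσA]
          have hmonoB : (monomial σB r : MvPolynomial (P2 f) R₀)
              = monomial σ' r * MvPolynomial.X vac * MvPolynomial.X vdb := by
            rw [MvPolynomial.X, MvPolynomial.X, monomial_mul, monomial_mul, mul_one, mul_one,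
              ← hσB]
          have hkey : (monomial σ r : MvPolynomial (P2 f) R₀)
              = monomial σ' r * pf4 R₀ f a c d b + monomial σA r - monomial σB r := by
            rw [hmono, hmonoA, hmonoB]
            calc monomial σ' r * MvPolynomial.X vcd * MvPolynomial.X vab
                = monomial σ' r * (MvPolynomial.X vab * MvPolynomial.X vcd) := by ring
            _ = monomial σ' r * (pf4 R₀ f a c d b - MvPolynomial.X vac * MvPolynomial.X vdb
                + MvPolynomial.X vad * MvPolynomial.X vcb) := by rw [hpf]
            _ = monomial σ' r * pf4 R₀ f a c d b
                + monomial σ' r * MvPolynomial.X vad * MvPolynomial.X vcb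
                - monomial σ' r * MvPolynomial.X vac * MvPolynomial.X vdb := by ring
          have : monomial σ r - (qA - qB)
              = monomial σ' r * pf4 R₀ f a c d b + (monomial σA r - qA) - (monomial σB r - qB) := by
            rw [hkey]; ring
          rw [this]
          exact sub_mem (add_mem (Ideal.mul_mem_left _ _ (pf4_mem_Ilam hac hcd hdb)) hIA) hIB
    · -- a killed variable occurs
      rw [Surv] at hsv
      push_neg at hsv
      obtain ⟨v, hv, hvl⟩ := hsv
      refine ⟨0, by simp, ?_⟩
      rw [sub_zero]
      have hdec : σ = (σ - Finsupp.single v 1) + Finsupp.single v 1 :=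
        (tsub_add_cancel_of_le (single_le_of_mem hv)).symm
      have : (monomial σ r : MvPolynomial (P2 f) R₀)
          = monomial (σ - Finsupp.single v 1) r * MvPolynomial.X v := by
        rw [MvPolynomial.X, monomial_mul, mul_one, ← hdec]
      rw [this]
      exact Ideal.mul_mem_left _ _ (X_mem_Ilam hvl)

lemma span_all (p : MvPolynomial (P2 f) R₀) :
    ∃ q : MvPolynomial (P2 f) R₀, (∀ ρ ∈ q.support, Std ρ ∧ Surv l ρ) ∧ p - q ∈ Ilam R₀ f l := by
  induction p using MvPolynomial.induction_on' with
  | monomial σ r => exact straighten (mu σ) σ r rfl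
  | add p1 p2 hp1 hp2 =>
      obtain ⟨q1, hq1, hI1⟩ := hp1
      obtain ⟨q2, hq2, hI2⟩ := hp2
      refine ⟨q1 + q2, fun ρ hρ => ?_, ?_⟩
      · rcases Finset.mem_union.mp (MvPolynomial.support_add hρ) with h | h
        · exact hq1 ρ h
        · exact hq2 ρ h
      · have : p1 + p2 - (q1 + q2) = (p1 - q1) + (p2 - q2) := by ring
        rw [this]
        exact add_mem hI1 hI2

lemma Ilam_le_ker :
    Ilam R₀ f l ≤ RingHom.ker (MvPolynomial.aeval (g (R₀ := R₀) (f := f) l)) := by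
  rw [Ilam]
  apply sup_le
  · rw [Pf4, Ideal.span_le]
    rintro p ⟨i, j, k, m, hij, hjk, hkm, rfl⟩
    have hik : i < k := hij.trans hjk
    have hjm : j < m := hjk.trans hkm
    have him : i < m := hik.trans hkm
    rw [SetLike.mem_coe, RingHom.mem_ker, pf4, xv, dif_pos hij, xv, dif_pos hkm, xv, dif_pos hik,
      xv, dif_pos hjm, xv, dif_pos him, xv, dif_pos hjk, map_add, map_sub, map_mul, map_mul,
      map_mul, MvPolynomial.aeval_X, MvPolynomial.aeval_X, MvPolynomial.aeval_X,
      MvPolynomial.aeval_X, MvPolynomial.aeval_X, MvPolynomial.aeval_X]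
    show g l ⟨(i,j),hij⟩ * g l ⟨(k,m),hkm⟩ - g l ⟨(i,k),hik⟩ * g l ⟨(j,m),hjm⟩
        + g l ⟨(i,m),him⟩ * g l ⟨(j,k),hjk⟩ = 0
    rw [g, g, g, g, g, g]
    ring
  · rw [Ideal.span_le]
    rintro p ⟨i, j, hij, hjl, rfl⟩
    rw [SetLike.mem_coe, RingHom.mem_ker, xv, dif_pos hij, MvPolynomial.aeval_X]
    show g l ⟨(i,j),hij⟩ = 0
    have hil : (i : ℕ) < l := (Fin.lt_def.mp hij).trans hjl
    rw [g, sv, if_pos hil, sv, if_pos hjl]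
    ring

lemma ker_le_Ilam :
    RingHom.ker (MvPolynomial.aeval (g (R₀ := R₀) (f := f) l)) ≤ Ilam R₀ f l := by
  intro p hp
  obtain ⟨q, hq, hpq⟩ := span_all p
  have h1 : MvPolynomial.aeval (g (R₀ := R₀) (f := f) l) (p - q) = 0 := Ilam_le_ker hpq
  have h2 : MvPolynomial.aeval (g (R₀ := R₀) (f := f) l) q = 0 := by
    have hp0 : MvPolynomial.aeval (g (R₀ := R₀) (f := f) l) p = 0 := hp
    rw [map_sub, hp0, zero_sub, neg_eq_zero] at h1
    exact h1
  have hq0 : q = 0 := indep hq h2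
  rw [hq0, sub_zero] at hpq
  exact hpq


end Aux

/-- if `R₀` is a Noetherian domain, `4 ≤ f` and `1 ≤ λ ≤ f - 1`,
then `I_λ` is a prime ideal. -/
theorem stmt_4 (R₀ : Type u) [CommRing R₀] [IsDomain R₀] [IsNoetherianRing R₀] (f l : ℕ)
    (hf : 4 ≤ f) (hl1 : 1 ≤ l) (hl2 : l ≤ f - 1) :
    (Ilam R₀ f l).IsPrime := by
  have heq : Ilam R₀ f l = RingHom.ker (MvPolynomial.aeval (g (R₀ := R₀) (f := f) l)) :=
    le_antisymm Ilam_le_ker ker_le_Ilam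
  rw [heq]
  exact RingHom.ker_isPrime _

end AluffiStmt
end
end

section
/- Let $R_0$ be an arbitrary commutative Noetherian ring, $\mathfrak{f} \geq 4$, $\mathcal{R} = R_0[x_{i,j}; t_i]$, and $J = \operatorname{Pf}_4(\mathbf{X}) + I_1(\mathbf{t}\mathbf{X})$. Then for each pair $i < j$, the localization $(\mathcal{R}/J)_{x_{i,j}}$ is isomorphic to a polynomial ring over $R_0[x_{i,j}, x_{i,j}^{-1}]$. Specifically, $(\mathcal{R}/J)_{x_{1,2}} \cong R_0[x_{1,2}, x_{1,2}^{-1}][S_1]$, where $S_1 = \{x_{i,j} : 1 \le i \le 2,\ 3 \le j \le \mathfrak{f}\} \cup \{t_j : 3 \le j \le \mathfrak{f}\}$ is a set of algebraically independent elements. -/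
open CategoryTheory
set_option synthInstance.maxHeartbeats 1000000
set_option maxHeartbeats 4000000

noncomputable section
namespace AluffiStmt

universe u

/-- Variables for the ring `𝓡 = R₀[x_{i,j}; t_i]`. -/
abbrev Var (f : ℕ) := P2 f ⊕ Fin f

/-- The `(i,j)` entry of the generic alternating matrix `X` in `𝓡`. -/
def xvt (R₀ : Type u) [CommRing R₀] (f : ℕ) (i j : Fin f) : MvPolynomial (Var f) R₀ :=
  if h : i < j then MvPolynomial.X (Sum.inl ⟨(i, j), h⟩)
  else if h : j < i then - MvPolynomial.X (Sum.inl ⟨(j, i), h⟩) else 0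

/-- The entry `t_i` of the generic row vector `t` in `𝓡`. -/
def tvt (R₀ : Type u) [CommRing R₀] (f : ℕ) (i : Fin f) : MvPolynomial (Var f) R₀ :=
  MvPolynomial.X (Sum.inr i)

/-- The Pfaffian of the `4 × 4` principal submatrix of `X` with rows/columns
`i < j < k < l`. -/
def pf4t (R₀ : Type u) [CommRing R₀] (f : ℕ) (i j k l : Fin f) : MvPolynomial (Var f) R₀ :=
  xvt R₀ f i j * xvt R₀ f k l - xvt R₀ f i k * xvt R₀ f j l + xvt R₀ f i l * xvt R₀ f j k

/-- The ideal `Pf₄(X)` of `𝓡`. -/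
def Pf4t (R₀ : Type u) [CommRing R₀] (f : ℕ) : Ideal (MvPolynomial (Var f) R₀) :=
  Ideal.span {p | ∃ i j k l : Fin f, i < j ∧ j < k ∧ k < l ∧ p = pf4t R₀ f i j k l}

/-- The `j`-th entry of the row vector `t·X`. -/
def tX (R₀ : Type u) [CommRing R₀] (f : ℕ) (j : Fin f) : MvPolynomial (Var f) R₀ :=
  ∑ i : Fin f, tvt R₀ f i * xvt R₀ f i j

/-- The ideal `I₁(t·X)` generated by the entries of `t·X`. -/
def ItX (R₀ : Type u) [CommRing R₀] (f : ℕ) : Ideal (MvPolynomial (Var f) R₀) :=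
  Ideal.span {p | ∃ j : Fin f, p = tX R₀ f j}

/-- The ideal `J = Pf₄(X) + I₁(t·X)`. -/
def Jt (R₀ : Type u) [CommRing R₀] (f : ℕ) : Ideal (MvPolynomial (Var f) R₀) :=
  Pf4t R₀ f + ItX R₀ f

/-- The index type for the set
`S₁ = {x_{1,j} : 3 ≤ j ≤ f} ∪ {x_{2,j} : 3 ≤ j ≤ f} ∪ {t_j : 3 ≤ j ≤ f}`
(0-indexed: `j ≥ 2`): the first component selects `x_{1,•}`, `x_{2,•}` or
`t_•`. -/
abbrev S1ty (f : ℕ) := Fin 3 × {j : Fin f // 2 ≤ (j : ℕ)}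

section Basic
variable (R₀ : Type u) [CommRing R₀] (f : ℕ)

lemma xvt_self (i : Fin f) : xvt R₀ f i i = 0 := by simp [xvt]

lemma xvt_antisymm (i j : Fin f) : xvt R₀ f j i = - xvt R₀ f i j := by
  rcases lt_trichotomy i j with h | h | h
  · simp [xvt, h, h.not_gt]
  · subst h; simp [xvt]
  · simp [xvt, h, h.not_gt]

lemma pf4t_swap1 (i j k l : Fin f) : pf4t R₀ f j i k l = - pf4t R₀ f i j k l := by
  unfold pf4t; rw [xvt_antisymm R₀ f i j]; ring

lemma pf4t_swap2 (i j k l : Fin f) : pf4t R₀ f i k j l = - pf4t R₀ f i j k l := by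
  unfold pf4t; rw [xvt_antisymm R₀ f j k]; ring

lemma pf4t_swap3 (i j k l : Fin f) : pf4t R₀ f i j l k = - pf4t R₀ f i j k l := by
  unfold pf4t; rw [xvt_antisymm R₀ f k l]; ring

lemma pf4t_swap_pairs (i j k l : Fin f) : pf4t R₀ f k l i j = pf4t R₀ f i j k l := by
  unfold pf4t
  rw [xvt_antisymm R₀ f i k, xvt_antisymm R₀ f j l, xvt_antisymm R₀ f i l, xvt_antisymm R₀ f j k]
  ring

lemma pf4t_eq12 (i k l : Fin f) : pf4t R₀ f i i k l = 0 := by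
  unfold pf4t; rw [xvt_self]; ring

lemma pf4t_eq23 (i j l : Fin f) : pf4t R₀ f i j j l = 0 := by
  unfold pf4t; rw [xvt_self]; ring

lemma pf4t_eq34 (i j k : Fin f) : pf4t R₀ f i j k k = 0 := by
  unfold pf4t; rw [xvt_self]; ring

lemma pf4t_eq24 (i j k : Fin f) : pf4t R₀ f i j k j = 0 := by
  unfold pf4t; rw [xvt_self, xvt_antisymm R₀ f j k]; ring

lemma pf4t_eq13 (i j l : Fin f) : pf4t R₀ f i j i l = 0 := by
  unfold pf4t; rw [xvt_self, xvt_antisymm R₀ f i j]; ring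

lemma pf4t_eq14 (i j k : Fin f) : pf4t R₀ f i j k i = 0 := by
  unfold pf4t; rw [xvt_self, xvt_antisymm R₀ f i j, xvt_antisymm R₀ f i k]; ring

lemma pf4t_mem_sorted {i j k l : Fin f} (h1 : i < j) (h2 : j < k) (h3 : k < l) :
    pf4t R₀ f i j k l ∈ Pf4t R₀ f :=
  Ideal.subset_span ⟨i, j, k, l, h1, h2, h3, rfl⟩

/-- membership for sorted-pairs case: `i < j`, `k < l`, `i < k`. -/
lemma pf4t_mem_aux {i j k l : Fin f} (h1 : i < j) (h2 : k < l) (h3 : i < k) :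
    pf4t R₀ f i j k l ∈ Pf4t R₀ f := by
  rcases lt_trichotomy j k with hjk | hjk | hjk
  · exact pf4t_mem_sorted R₀ f h1 hjk h2
  · subst hjk; rw [pf4t_eq23]; exact zero_mem _
  · rcases lt_trichotomy j l with hjl | hjl | hjl
    · -- i < k < j < l
      have : pf4t R₀ f i j k l = - pf4t R₀ f i k j l := by rw [pf4t_swap2]
      rw [this]
      exact neg_mem (pf4t_mem_sorted R₀ f h3 hjk hjl)
    · subst hjl; rw [pf4t_eq24]; exact zero_mem _
    · -- i < k < l < j
      have : pf4t R₀ f i j k l = pf4t R₀ f i k l j := by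
        rw [pf4t_swap2 R₀ f i k j l, ← pf4t_swap3 R₀ f i k j l]
      rw [this]
      exact pf4t_mem_sorted R₀ f h3 h2 hjl

lemma pf4t_mem (i j k l : Fin f) : pf4t R₀ f i j k l ∈ Pf4t R₀ f := by
  have haux : ∀ i j k l : Fin f, i < j → k < l → pf4t R₀ f i j k l ∈ Pf4t R₀ f := by
    intro i j k l h1 h2
    rcases lt_trichotomy i k with h3 | h3 | h3
    · exact pf4t_mem_aux R₀ f h1 h2 h3
    · subst h3; rw [pf4t_eq13]; exact zero_mem _
    · rw [← pf4t_swap_pairs]; exact pf4t_mem_aux R₀ f h2 h1 h3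
  have haux2 : ∀ i j k l : Fin f, i < j → pf4t R₀ f i j k l ∈ Pf4t R₀ f := by
    intro i j k l h1
    rcases lt_trichotomy k l with h2 | h2 | h2
    · exact haux i j k l h1 h2
    · subst h2; rw [pf4t_eq34]; exact zero_mem _
    · rw [show pf4t R₀ f i j k l = - pf4t R₀ f i j l k by rw [pf4t_swap3]]
      exact neg_mem (haux i j l k h1 h2)
  rcases lt_trichotomy i j with h1 | h1 | h1
  · exact haux2 i j k l h1
  · subst h1; rw [pf4t_eq12]; exact zero_mem _
  · rw [show pf4t R₀ f i j k l = - pf4t R₀ f j i k l by rw [pf4t_swap1]]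
    exact neg_mem (haux2 j i k l h1)

end Basic

section Main

open MvPolynomial

variable (R₀ : Type u) [CommRing R₀] (f : ℕ) (a b : Fin f)

/-- `B = R₀[x,x⁻¹]`. -/
abbrev Bb (R₀ : Type u) [CommRing R₀] : Type u :=
  Localization.Away (Polynomial.X : Polynomial R₀)

/-- index set for the polynomial generators -/
abbrev Vv (f : ℕ) (a b : Fin f) := Fin 3 × {j : Fin f // j ≠ a ∧ j ≠ b}

abbrev Pp := MvPolynomial (Vv f a b) (Bb R₀)

def wP : Pp R₀ f a b := MvPolynomial.C (algebraMap (Polynomial R₀) (Bb R₀) Polynomial.X)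

def wP' : Pp R₀ f a b :=
  MvPolynomial.C (IsLocalization.Away.invSelf (S := Bb R₀) (Polynomial.X : Polynomial R₀))

lemma wP_mul_wP' : wP R₀ f a b * wP' R₀ f a b = 1 := by
  rw [wP, wP', ← map_mul, IsLocalization.Away.mul_invSelf, map_one]

def uP (i : Fin f) : Pp R₀ f a b :=
  if h : i = a then 0 else if h2 : i = b then wP R₀ f a b
  else MvPolynomial.X (0, ⟨i, h, h2⟩)

def vP (i : Fin f) : Pp R₀ f a b :=
  if h : i = a then - wP R₀ f a b else if h2 : i = b then 0
  else MvPolynomial.X (1, ⟨i, h, h2⟩)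

def t0P (i : Fin f) : Pp R₀ f a b :=
  if h : i = a then 0 else if h2 : i = b then 0
  else MvPolynomial.X (2, ⟨i, h, h2⟩)

def EP (i j : Fin f) : Pp R₀ f a b :=
  wP' R₀ f a b * (uP R₀ f a b i * vP R₀ f a b j - uP R₀ f a b j * vP R₀ f a b i)

def TP (i : Fin f) : Pp R₀ f a b :=
  if i = a then wP' R₀ f a b * ∑ m, t0P R₀ f a b m * vP R₀ f a b m
  else if i = b then -(wP' R₀ f a b * ∑ m, t0P R₀ f a b m * uP R₀ f a b m)
  else t0P R₀ f a b i

def psi : MvPolynomial (Var f) R₀ →+* Pp R₀ f a b :=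
  MvPolynomial.eval₂Hom ((MvPolynomial.C (σ := Vv f a b)).comp
    ((algebraMap (Polynomial R₀) (Bb R₀)).comp Polynomial.C))
    (fun v => match v with
      | .inl p => EP R₀ f a b p.1.1 p.1.2
      | .inr i => TP R₀ f a b i)

lemma psi_C (r : R₀) :
    psi R₀ f a b (MvPolynomial.C r) =
      MvPolynomial.C (algebraMap (Polynomial R₀) (Bb R₀) (Polynomial.C r)) := by
  simp [psi]

lemma psi_tvt (i : Fin f) : psi R₀ f a b (tvt R₀ f i) = TP R₀ f a b i := by
  simp [psi, tvt]

lemma psi_xvt (i j : Fin f) : psi R₀ f a b (xvt R₀ f i j) = EP R₀ f a b i j := by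
  rcases lt_trichotomy i j with h | h | h
  · rw [xvt, dif_pos h]; simp [psi]
  · subst h; rw [xvt_self]; rw [map_zero]; unfold EP; ring
  · rw [xvt, dif_neg (asymm h), dif_pos h, map_neg]
    have : psi R₀ f a b (MvPolynomial.X (Sum.inl ⟨(j, i), h⟩)) = EP R₀ f a b j i := by
      simp [psi]
    rw [this]; unfold EP; ring

lemma psi_pf4t (i j k l : Fin f) : psi R₀ f a b (pf4t R₀ f i j k l) = 0 := by
  simp only [pf4t, map_add, map_sub, map_mul, psi_xvt]
  unfold EP; ring

lemma psi_tX (hba : b ≠ a) (k : Fin f) : psi R₀ f a b (tX R₀ f k) = 0 := by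
  have hTu : (∑ i, TP R₀ f a b i * uP R₀ f a b i) = 0 := by
    have h1 : ∑ i, (TP R₀ f a b i * uP R₀ f a b i - t0P R₀ f a b i * uP R₀ f a b i) =
        TP R₀ f a b b * uP R₀ f a b b - t0P R₀ f a b b * uP R₀ f a b b := by
      apply Finset.sum_eq_single_of_mem b (Finset.mem_univ b)
      intro i _ hib
      by_cases hia : i = a
      · rw [show uP R₀ f a b i = 0 from by simp [uP, hia]]; ring
      · rw [show TP R₀ f a b i = t0P R₀ f a b i from by simp [TP, hia, hib]]; ring
    have h2 : TP R₀ f a b b = -(wP' R₀ f a b * ∑ m, t0P R₀ f a b m * uP R₀ f a b m) := by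
      simp [TP, hba]
    have h3 : uP R₀ f a b b = wP R₀ f a b := by simp [uP, hba]
    have h4 : t0P R₀ f a b b = 0 := by simp [t0P, hba]
    calc ∑ i, TP R₀ f a b i * uP R₀ f a b i
        = ∑ i, (t0P R₀ f a b i * uP R₀ f a b i +
            (TP R₀ f a b i * uP R₀ f a b i - t0P R₀ f a b i * uP R₀ f a b i)) := by
          exact Finset.sum_congr rfl fun i _ => by ring
      _ = (∑ i, t0P R₀ f a b i * uP R₀ f a b i) +
            (TP R₀ f a b b * uP R₀ f a b b - t0P R₀ f a b b * uP R₀ f a b b) := by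
          rw [Finset.sum_add_distrib, h1]
      _ = 0 := by
          rw [h2, h3, h4]
          linear_combination (-(∑ m, t0P R₀ f a b m * uP R₀ f a b m)) * wP_mul_wP' R₀ f a b
  have hTv : (∑ i, TP R₀ f a b i * vP R₀ f a b i) = 0 := by
    have h1 : ∑ i, (TP R₀ f a b i * vP R₀ f a b i - t0P R₀ f a b i * vP R₀ f a b i) =
        TP R₀ f a b a * vP R₀ f a b a - t0P R₀ f a b a * vP R₀ f a b a := by
      apply Finset.sum_eq_single_of_mem a (Finset.mem_univ a)
      intro i _ hia
      by_cases hib : i = b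
      · rw [show vP R₀ f a b i = 0 from by simp [vP, hia, hib, hba]]; ring
      · rw [show TP R₀ f a b i = t0P R₀ f a b i from by simp [TP, hia, hib]]; ring
    have h2 : TP R₀ f a b a = wP' R₀ f a b * ∑ m, t0P R₀ f a b m * vP R₀ f a b m := by
      simp [TP]
    have h3 : vP R₀ f a b a = - wP R₀ f a b := by simp [vP]
    have h4 : t0P R₀ f a b a = 0 := by simp [t0P]
    calc ∑ i, TP R₀ f a b i * vP R₀ f a b i
        = ∑ i, (t0P R₀ f a b i * vP R₀ f a b i +
            (TP R₀ f a b i * vP R₀ f a b i - t0P R₀ f a b i * vP R₀ f a b i)) := by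
          exact Finset.sum_congr rfl fun i _ => by ring
      _ = (∑ i, t0P R₀ f a b i * vP R₀ f a b i) +
            (TP R₀ f a b a * vP R₀ f a b a - t0P R₀ f a b a * vP R₀ f a b a) := by
          rw [Finset.sum_add_distrib, h1]
      _ = 0 := by
          rw [h2, h3, h4]
          linear_combination (-(∑ m, t0P R₀ f a b m * vP R₀ f a b m)) * wP_mul_wP' R₀ f a b
  rw [tX, map_sum]
  calc ∑ i, psi R₀ f a b (tvt R₀ f i * xvt R₀ f i k)
      = ∑ i, (wP' R₀ f a b * vP R₀ f a b k * (TP R₀ f a b i * uP R₀ f a b i) -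
          wP' R₀ f a b * uP R₀ f a b k * (TP R₀ f a b i * vP R₀ f a b i)) := by
        refine Finset.sum_congr rfl fun i _ => ?_
        rw [map_mul, psi_tvt, psi_xvt]; unfold EP; ring
    _ = wP' R₀ f a b * vP R₀ f a b k * (∑ i, TP R₀ f a b i * uP R₀ f a b i) -
          wP' R₀ f a b * uP R₀ f a b k * (∑ i, TP R₀ f a b i * vP R₀ f a b i) := by
        rw [Finset.sum_sub_distrib, Finset.mul_sum, Finset.mul_sum]
    _ = 0 := by rw [hTu, hTv]; ring

/-! quotient and localization side -/

abbrev Qq (R₀ : Type u) [CommRing R₀] (f : ℕ) := MvPolynomial (Var f) R₀ ⧸ Jt R₀ f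

abbrev mkQt : MvPolynomial (Var f) R₀ →+* Qq R₀ f := Ideal.Quotient.mk (Jt R₀ f)

abbrev Ll := Localization.Away (mkQt R₀ f (xvt R₀ f a b))

instance : AddCancelMonoid (Ll R₀ f a b) :=
  AddGroup.toAddCancelMonoid

instance : IsCancelAdd (Ll R₀ f a b) :=
  AddCancelMonoid.toIsCancelAdd _

/-- the composite `𝓡 → Q → L`. -/
def gQ : MvPolynomial (Var f) R₀ →+* Ll R₀ f a b :=
  (algebraMap (Qq R₀ f) (Ll R₀ f a b)).comp (mkQt R₀ f)

lemma gQ_apply (p : MvPolynomial (Var f) R₀) :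
    gQ R₀ f a b p = algebraMap (Qq R₀ f) (Ll R₀ f a b) (mkQt R₀ f p) := rfl

lemma pf4t_mem_Jt (i j k l : Fin f) : pf4t R₀ f i j k l ∈ Jt R₀ f := by
  rw [Jt, Ideal.add_eq_sup]
  exact Ideal.mem_sup_left (pf4t_mem R₀ f i j k l)

lemma tX_mem_Jt (k : Fin f) : tX R₀ f k ∈ Jt R₀ f := by
  rw [Jt, Ideal.add_eq_sup]
  exact Ideal.mem_sup_right (Ideal.subset_span ⟨k, rfl⟩)

lemma gQ_pf4t (i j k l : Fin f) : gQ R₀ f a b (pf4t R₀ f i j k l) = 0 := by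
  rw [gQ_apply, Ideal.Quotient.eq_zero_iff_mem.mpr (pf4t_mem_Jt R₀ f i j k l), map_zero]

lemma gQ_tX (k : Fin f) : gQ R₀ f a b (tX R₀ f k) = 0 := by
  rw [gQ_apply, Ideal.Quotient.eq_zero_iff_mem.mpr (tX_mem_Jt R₀ f k), map_zero]

lemma gQ_key (i j : Fin f) :
    gQ R₀ f a b (xvt R₀ f a i) * gQ R₀ f a b (xvt R₀ f b j) -
      gQ R₀ f a b (xvt R₀ f a j) * gQ R₀ f a b (xvt R₀ f b i) =
    gQ R₀ f a b (xvt R₀ f a b) * gQ R₀ f a b (xvt R₀ f i j) := by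
  have h0 := gQ_pf4t R₀ f a b a b i j
  simp only [pf4t, map_add, map_sub, map_mul] at h0
  linear_combination - h0

lemma hU : IsUnit (gQ R₀ f a b (xvt R₀ f a b)) :=
  IsLocalization.Away.algebraMap_isUnit (S := Ll R₀ f a b) (mkQt R₀ f (xvt R₀ f a b))

/-- `R₀[y] → L`, `y ↦ x_{ab}`. -/
def g0 : Polynomial R₀ →+* Ll R₀ f a b :=
  Polynomial.eval₂RingHom ((gQ R₀ f a b).comp MvPolynomial.C) (gQ R₀ f a b (xvt R₀ f a b))

lemma g0_C (r : R₀) : g0 R₀ f a b (Polynomial.C r) = gQ R₀ f a b (MvPolynomial.C r) := by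
  simp [g0]

lemma g0_X : g0 R₀ f a b Polynomial.X = gQ R₀ f a b (xvt R₀ f a b) := by
  simp [g0]

/-- `B → L`. -/
def hBL : Bb R₀ →+* Ll R₀ f a b :=
  IsLocalization.Away.lift (g := g0 R₀ f a b) Polynomial.X
    (by rw [g0_X]; exact hU R₀ f a b)

lemma hBL_algebraMap (p : Polynomial R₀) :
    hBL R₀ f a b (algebraMap (Polynomial R₀) (Bb R₀) p) = g0 R₀ f a b p :=
  IsLocalization.Away.lift_eq _ _ _

/-- the variable assignment for `α`. -/
def vt (v : Vv f a b) : MvPolynomial (Var f) R₀ :=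
  if v.1 = 0 then xvt R₀ f a v.2 else if v.1 = 1 then xvt R₀ f b v.2 else tvt R₀ f v.2

def alpha : Pp R₀ f a b →+* Ll R₀ f a b :=
  MvPolynomial.eval₂Hom (hBL R₀ f a b) (fun v => gQ R₀ f a b (vt R₀ f a b v))

lemma alpha_C (bb : Bb R₀) : alpha R₀ f a b (MvPolynomial.C bb) = hBL R₀ f a b bb :=
  MvPolynomial.eval₂Hom_C _ _ _

lemma alpha_X (v : Vv f a b) :
    alpha R₀ f a b (MvPolynomial.X v) = gQ R₀ f a b (vt R₀ f a b v) :=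
  MvPolynomial.eval₂Hom_X' _ _ _

lemma alpha_w : alpha R₀ f a b (wP R₀ f a b) = gQ R₀ f a b (xvt R₀ f a b) := by
  rw [wP, alpha_C, hBL_algebraMap, g0_X]

lemma alpha_w' : gQ R₀ f a b (xvt R₀ f a b) * alpha R₀ f a b (wP' R₀ f a b) = 1 := by
  rw [← alpha_w, ← map_mul, wP_mul_wP', map_one]

lemma alpha_u (hab : a < b) (i : Fin f) :
    alpha R₀ f a b (uP R₀ f a b i) = gQ R₀ f a b (xvt R₀ f a i) := by
  by_cases hia : i = a
  · rw [show uP R₀ f a b i = 0 from by simp [uP, hia], hia, xvt_self, map_zero, map_zero]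
  · by_cases hib : i = b
    · rw [show uP R₀ f a b i = wP R₀ f a b from by simp [uP, hia, hib, hab.ne'], hib]
      exact alpha_w R₀ f a b
    · rw [show uP R₀ f a b i = MvPolynomial.X (0, ⟨i, hia, hib⟩) from by simp [uP, hia, hib],
        alpha_X]
      simp [vt]

lemma alpha_v (hab : a < b) (i : Fin f) :
    alpha R₀ f a b (vP R₀ f a b i) = gQ R₀ f a b (xvt R₀ f b i) := by
  by_cases hia : i = a
  · rw [show vP R₀ f a b i = - wP R₀ f a b from by simp [vP, hia], hia, map_neg, alpha_w,
      xvt_antisymm R₀ f a b, map_neg]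
  · by_cases hib : i = b
    · rw [show vP R₀ f a b i = 0 from by simp [vP, hia, hib, hab.ne'], hib, xvt_self,
        map_zero, map_zero]
    · rw [show vP R₀ f a b i = MvPolynomial.X (1, ⟨i, hia, hib⟩) from by simp [vP, hia, hib],
        alpha_X]
      simp [vt]

/-- truncated `t` in `𝓡`. -/
def tv0 (m : Fin f) : MvPolynomial (Var f) R₀ :=
  if m = a then 0 else if m = b then 0 else tvt R₀ f m

lemma tv0_a : tv0 R₀ f a b a = 0 := by simp [tv0]

lemma tv0_b : tv0 R₀ f a b b = 0 := by by_cases h : b = a <;> simp [tv0, h]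

lemma alpha_t0 (i : Fin f) :
    alpha R₀ f a b (t0P R₀ f a b i) = gQ R₀ f a b (tv0 R₀ f a b i) := by
  by_cases hia : i = a
  · rw [show t0P R₀ f a b i = 0 from by simp [t0P, hia], hia, tv0_a, map_zero, map_zero]
  · by_cases hib : i = b
    · rw [show t0P R₀ f a b i = 0 from by simp [t0P, hia, hib], hib, tv0_b, map_zero, map_zero]
    · rw [show t0P R₀ f a b i = MvPolynomial.X (2, ⟨i, hia, hib⟩) from by simp [t0P, hia, hib],
        alpha_X, show tv0 R₀ f a b i = tvt R₀ f i from by simp [tv0, hia, hib]]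
      simp [vt]

lemma alpha_E (hab : a < b) (i j : Fin f) :
    alpha R₀ f a b (EP R₀ f a b i j) = gQ R₀ f a b (xvt R₀ f i j) := by
  rw [EP, map_mul, map_sub, map_mul, map_mul, alpha_u R₀ f a b hab, alpha_u R₀ f a b hab,
    alpha_v R₀ f a b hab, alpha_v R₀ f a b hab]
  rw [show gQ R₀ f a b (xvt R₀ f a i) * gQ R₀ f a b (xvt R₀ f b j) -
      gQ R₀ f a b (xvt R₀ f a j) * gQ R₀ f a b (xvt R₀ f b i) =
      gQ R₀ f a b (xvt R₀ f a b) * gQ R₀ f a b (xvt R₀ f i j) from gQ_key R₀ f a b i j]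
  linear_combination gQ R₀ f a b (xvt R₀ f i j) * alpha_w' R₀ f a b

lemma sum_tv0_mul_b :
    (∑ m, tv0 R₀ f a b m * xvt R₀ f b m) =
      - tX R₀ f b + tvt R₀ f a * xvt R₀ f a b := by
  have h : ∑ m, (tv0 R₀ f a b m * xvt R₀ f b m + tvt R₀ f m * xvt R₀ f m b) =
      tvt R₀ f a * xvt R₀ f a b := by
    rw [Finset.sum_eq_single_of_mem a (Finset.mem_univ a)]
    · rw [tv0_a]; ring
    · intro m _ hma
      by_cases hmb : m = b
      · rw [hmb, tv0_b, xvt_self]; ring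
      · rw [show tv0 R₀ f a b m = tvt R₀ f m from by simp [tv0, hma, hmb],
          xvt_antisymm R₀ f b m]
        ring
  have h2 : (∑ m, tv0 R₀ f a b m * xvt R₀ f b m) + tX R₀ f b =
      tvt R₀ f a * xvt R₀ f a b := by
    rw [tX, ← Finset.sum_add_distrib]
    exact h
  have h3 := eq_sub_of_add_eq h2
  rw [h3]; ring

lemma sum_tv0_mul_a :
    (∑ m, tv0 R₀ f a b m * xvt R₀ f a m) =
      - tX R₀ f a - tvt R₀ f b * xvt R₀ f a b := by
  have h : ∑ m, (tv0 R₀ f a b m * xvt R₀ f a m + tvt R₀ f m * xvt R₀ f m a) =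
      -(tvt R₀ f b * xvt R₀ f a b) := by
    rw [Finset.sum_eq_single_of_mem b (Finset.mem_univ b)]
    · rw [tv0_b, xvt_antisymm R₀ f a b]; ring
    · intro m _ hmb
      by_cases hma : m = a
      · rw [hma, tv0_a, xvt_self]; ring
      · rw [show tv0 R₀ f a b m = tvt R₀ f m from by simp [tv0, hma, hmb],
          xvt_antisymm R₀ f a m]
        ring
  have h2 : (∑ m, tv0 R₀ f a b m * xvt R₀ f a m) + tX R₀ f a =
      -(tvt R₀ f b * xvt R₀ f a b) := by
    rw [tX, ← Finset.sum_add_distrib]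
    exact h
  have h3 := eq_sub_of_add_eq h2
  rw [h3]; ring

lemma alpha_T (hab : a < b) (i : Fin f) :
    alpha R₀ f a b (TP R₀ f a b i) = gQ R₀ f a b (tvt R₀ f i) := by
  by_cases hia : i = a
  · rw [show TP R₀ f a b i =
        wP' R₀ f a b * ∑ m, t0P R₀ f a b m * vP R₀ f a b m from by simp [TP, hia]]
    rw [map_mul, map_sum]
    rw [Finset.sum_congr rfl (fun m _ => by
      rw [map_mul, alpha_t0, alpha_v R₀ f a b hab, ← map_mul] :
        ∀ m ∈ Finset.univ, alpha R₀ f a b (t0P R₀ f a b m * vP R₀ f a b m) =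
          gQ R₀ f a b (tv0 R₀ f a b m * xvt R₀ f b m))]
    rw [← map_sum, sum_tv0_mul_b, map_add, map_neg, gQ_tX, map_mul, hia]
    linear_combination gQ R₀ f a b (tvt R₀ f a) * alpha_w' R₀ f a b
  · by_cases hib : i = b
    · rw [show TP R₀ f a b i =
          -(wP' R₀ f a b * ∑ m, t0P R₀ f a b m * uP R₀ f a b m) from by
            simp [TP, hia, hib, hab.ne']]
      rw [map_neg, map_mul, map_sum]
      rw [Finset.sum_congr rfl (fun m _ => by
        rw [map_mul, alpha_t0, alpha_u R₀ f a b hab, ← map_mul] :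
          ∀ m ∈ Finset.univ, alpha R₀ f a b (t0P R₀ f a b m * uP R₀ f a b m) =
            gQ R₀ f a b (tv0 R₀ f a b m * xvt R₀ f a m))]
      rw [← map_sum, sum_tv0_mul_a, map_sub, map_neg, gQ_tX, map_mul, hib]
      linear_combination gQ R₀ f a b (tvt R₀ f b) * alpha_w' R₀ f a b
    · rw [show TP R₀ f a b i = t0P R₀ f a b i from by simp [TP, hia, hib], alpha_t0,
        show tv0 R₀ f a b i = tvt R₀ f i from by simp [tv0, hia, hib]]

lemma psi_Jt (hba : b ≠ a) : ∀ p ∈ Jt R₀ f, psi R₀ f a b p = 0 := by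
  have hle : Jt R₀ f ≤ RingHom.ker (psi R₀ f a b) := by
    rw [Jt, Ideal.add_eq_sup, sup_le_iff]
    constructor
    · rw [Pf4t, Ideal.span_le]
      rintro q ⟨i, j, k, l, -, -, -, rfl⟩
      simp only [SetLike.mem_coe, RingHom.mem_ker]
      exact psi_pf4t R₀ f a b i j k l
    · rw [ItX, Ideal.span_le]
      rintro q ⟨k, rfl⟩
      simp only [SetLike.mem_coe, RingHom.mem_ker]
      exact psi_tX R₀ f a b hba k
  intro p hp
  exact hle hp

def psiQ (hba : b ≠ a) : Qq R₀ f →+* Pp R₀ f a b :=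
  Ideal.Quotient.lift (Jt R₀ f) (psi R₀ f a b) (psi_Jt R₀ f a b hba)

lemma psiQ_mk (hba : b ≠ a) (p : MvPolynomial (Var f) R₀) :
    psiQ R₀ f a b hba (mkQt R₀ f p) = psi R₀ f a b p :=
  Ideal.Quotient.lift_mk _ _ _

lemma EP_ab (hab : a < b) : EP R₀ f a b a b = wP R₀ f a b := by
  rw [EP, show uP R₀ f a b a = 0 from by simp [uP],
    show uP R₀ f a b b = wP R₀ f a b from by simp [uP, hab.ne'],
    show vP R₀ f a b a = - wP R₀ f a b from by simp [vP],
    show vP R₀ f a b b = 0 from by simp [vP, hab.ne']]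
  linear_combination wP R₀ f a b * wP_mul_wP' R₀ f a b

lemma EP_left (j : Fin f) : EP R₀ f a b a j = uP R₀ f a b j := by
  rw [EP, show uP R₀ f a b a = 0 from by simp [uP],
    show vP R₀ f a b a = - wP R₀ f a b from by simp [vP]]
  linear_combination uP R₀ f a b j * wP_mul_wP' R₀ f a b

lemma EP_right (hab : a < b) (j : Fin f) : EP R₀ f a b b j = vP R₀ f a b j := by
  rw [EP, show uP R₀ f a b b = wP R₀ f a b from by simp [uP, hab.ne'],
    show vP R₀ f a b b = 0 from by simp [vP, hab.ne']]
  linear_combination vP R₀ f a b j * wP_mul_wP' R₀ f a b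

lemma psiQ_unit (hab : a < b) : IsUnit (psiQ R₀ f a b hab.ne' (mkQt R₀ f (xvt R₀ f a b))) := by
  rw [psiQ_mk, psi_xvt, EP_ab R₀ f a b hab]
  exact IsUnit.of_mul_eq_one _ (wP_mul_wP' R₀ f a b)

def beta (hab : a < b) : Ll R₀ f a b →+* Pp R₀ f a b :=
  IsLocalization.Away.lift (S := Ll R₀ f a b) (g := psiQ R₀ f a b hab.ne')
    (mkQt R₀ f (xvt R₀ f a b)) (psiQ_unit R₀ f a b hab)

lemma beta_gQ (hab : a < b) (p : MvPolynomial (Var f) R₀) :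
    beta R₀ f a b hab (gQ R₀ f a b p) = psi R₀ f a b p := by
  rw [gQ_apply, beta, IsLocalization.Away.lift_eq, psiQ_mk]

lemma alpha_psi (hab : a < b) (p : MvPolynomial (Var f) R₀) :
    alpha R₀ f a b (psi R₀ f a b p) = gQ R₀ f a b p := by
  have hcomp : (alpha R₀ f a b).comp (psi R₀ f a b) = gQ R₀ f a b := by
    apply MvPolynomial.ringHom_ext
    · intro r
      rw [RingHom.comp_apply, psi_C, alpha_C, hBL_algebraMap, g0_C]
    · rintro (⟨⟨i, j⟩, hij⟩ | i)
      · rw [RingHom.comp_apply,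
          show (MvPolynomial.X (Sum.inl ⟨(i, j), hij⟩) : MvPolynomial (Var f) R₀) =
            xvt R₀ f i j from by rw [xvt, dif_pos hij],
          psi_xvt, alpha_E R₀ f a b hab]
      · rw [RingHom.comp_apply,
          show (MvPolynomial.X (Sum.inr i) : MvPolynomial (Var f) R₀) = tvt R₀ f i from rfl,
          psi_tvt, alpha_T R₀ f a b hab]
  exact RingHom.congr_fun hcomp p

lemma comp1 (hab : a < b) :
    (alpha R₀ f a b).comp (beta R₀ f a b hab) = RingHom.id (Ll R₀ f a b) := by
  apply IsLocalization.ringHom_ext (S := Ll R₀ f a b) (P := Ll R₀ f a b)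
    (Submonoid.powers (mkQt R₀ f (xvt R₀ f a b)))
  refine RingHom.ext fun q => ?_
  obtain ⟨p, rfl⟩ := Ideal.Quotient.mk_surjective q
  rw [RingHom.comp_apply, RingHom.comp_apply, RingHom.comp_apply, ← gQ_apply,
    beta_gQ R₀ f a b hab, alpha_psi R₀ f a b hab, RingHom.id_apply, gQ_apply]

lemma beta_hBL (hab : a < b) :
    (beta R₀ f a b hab).comp (hBL R₀ f a b) = (MvPolynomial.C : Bb R₀ →+* Pp R₀ f a b) := by
  apply IsLocalization.ringHom_ext (S := Bb R₀) (P := Pp R₀ f a b)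
    (Submonoid.powers (Polynomial.X : Polynomial R₀))
  refine Polynomial.ringHom_ext' ?_ ?_
  · ext r
    simp only [RingHom.comp_apply]
    rw [hBL_algebraMap, g0_C, beta_gQ R₀ f a b hab, psi_C]
  · simp only [RingHom.comp_apply]
    rw [hBL_algebraMap, g0_X, beta_gQ R₀ f a b hab, psi_xvt, EP_ab R₀ f a b hab, wP]

lemma comp2 (hab : a < b) :
    (beta R₀ f a b hab).comp (alpha R₀ f a b) = RingHom.id (Pp R₀ f a b) := by
  apply MvPolynomial.ringHom_ext
  · intro bb
    rw [RingHom.comp_apply, alpha_C, RingHom.id_apply]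
    exact RingHom.congr_fun (beta_hBL R₀ f a b hab) bb
  · rintro ⟨c, j⟩
    rw [RingHom.comp_apply, alpha_X, RingHom.id_apply, beta_gQ R₀ f a b hab]
    fin_cases c
    · show psi R₀ f a b (vt R₀ f a b (0, j)) = MvPolynomial.X (0, j)
      rw [show vt R₀ f a b (0, j) = xvt R₀ f a j from by simp [vt], psi_xvt, EP_left,
        show uP R₀ f a b j.1 = MvPolynomial.X (0, j) from by simp [uP, j.2.1, j.2.2]]
    · show psi R₀ f a b (vt R₀ f a b (1, j)) = MvPolynomial.X (1, j)
      rw [show vt R₀ f a b (1, j) = xvt R₀ f b j from by simp [vt], psi_xvt,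
        EP_right R₀ f a b hab,
        show vP R₀ f a b j.1 = MvPolynomial.X (1, j) from by simp [vP, j.2.1, j.2.2]]
    · show psi R₀ f a b (vt R₀ f a b (2, j)) = MvPolynomial.X (2, j)
      rw [show vt R₀ f a b (2, j) = tvt R₀ f j from by simp [vt], psi_tvt,
        show TP R₀ f a b j.1 = t0P R₀ f a b j.1 from by simp [TP, j.2.1, j.2.2],
        show t0P R₀ f a b j.1 = MvPolynomial.X (2, j) from by simp [t0P, j.2.1, j.2.2]]

def mainEquiv (hab : a < b) : Pp R₀ f a b ≃+* Ll R₀ f a b :=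
  RingEquiv.ofRingHom (alpha R₀ f a b) (beta R₀ f a b hab) (comp1 R₀ f a b hab) (comp2 R₀ f a b hab)

lemma mainEquiv_apply (hab : a < b) (p : Pp R₀ f a b) :
    mainEquiv R₀ f a b hab p = alpha R₀ f a b p := rfl

lemma main (hab : a < b) :
    ∃ φ : MvPolynomial (Vv f a b) (Bb R₀) ≃+* Ll R₀ f a b,
      (∀ r : R₀, φ (MvPolynomial.C (algebraMap (Polynomial R₀) (Bb R₀) (Polynomial.C r))) =
          algebraMap (Qq R₀ f) (Ll R₀ f a b) (mkQt R₀ f (MvPolynomial.C r))) ∧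
      (φ (MvPolynomial.C (algebraMap (Polynomial R₀) (Bb R₀) Polynomial.X)) =
          algebraMap (Qq R₀ f) (Ll R₀ f a b) (mkQt R₀ f (xvt R₀ f a b))) ∧
      (∀ j : {j : Fin f // j ≠ a ∧ j ≠ b},
        φ (MvPolynomial.X (0, j)) =
            algebraMap (Qq R₀ f) (Ll R₀ f a b) (mkQt R₀ f (xvt R₀ f a j.1)) ∧
        φ (MvPolynomial.X (1, j)) =
            algebraMap (Qq R₀ f) (Ll R₀ f a b) (mkQt R₀ f (xvt R₀ f b j.1)) ∧
        φ (MvPolynomial.X (2, j)) =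
            algebraMap (Qq R₀ f) (Ll R₀ f a b) (mkQt R₀ f (tvt R₀ f j.1))) := by
  refine ⟨mainEquiv R₀ f a b hab, fun r => ?_, ?_, fun j => ⟨?_, ?_, ?_⟩⟩
  · rw [mainEquiv_apply, alpha_C, hBL_algebraMap, g0_C, gQ_apply]
  · rw [mainEquiv_apply, alpha_C, hBL_algebraMap, g0_X, gQ_apply]
  · rw [mainEquiv_apply, alpha_X, ← gQ_apply, show vt R₀ f a b (0, j) = xvt R₀ f a j
      from by simp [vt], gQ_apply]
  · rw [mainEquiv_apply, alpha_X, ← gQ_apply, show vt R₀ f a b (1, j) = xvt R₀ f b j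
      from by simp [vt], gQ_apply]
  · rw [mainEquiv_apply, alpha_X, ← gQ_apply, show vt R₀ f a b (2, j) = tvt R₀ f j
      from by simp [vt], gQ_apply]

lemma renameEquiv_ringEquiv_apply {σ τ : Type*} (e : σ ≃ τ) (p : MvPolynomial σ (Bb R₀)) :
    ((MvPolynomial.renameEquiv (Bb R₀) e).toRingEquiv : MvPolynomial σ (Bb R₀) ≃+*
      MvPolynomial τ (Bb R₀)) p = MvPolynomial.rename e p := rfl

end Main

/-- for an arbitrary Noetherian ring `R₀` and `f ≥ 4`, and each
pair `i < j`, the localization of `𝓡/J` at `x_{i,j}` is a polynomial ring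
over `R₀[x_{i,j}, x_{i,j}⁻¹]` (the latter realized as the localization `B` of
`R₀[y]` away from `y`, with `y ↦ x_{i,j}`, compatibly with `R₀`).
Specifically, for `(i,j) = (1,2)`, it is the polynomial ring on the set `S₁`
of (the images of) the variables `x_{1,j}, x_{2,j}, t_j` for `3 ≤ j ≤ f`. -/
theorem stmt_15 (R₀ : Type u) [CommRing R₀] [IsNoetherianRing R₀] (f : ℕ) (hf : 4 ≤ f) :
    letI Q := MvPolynomial (Var f) R₀ ⧸ Jt R₀ f
    letI mkQ : MvPolynomial (Var f) R₀ →+* Q := Ideal.Quotient.mk _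
    letI B := Localization.Away (Polynomial.X : Polynomial R₀)
    (∀ i j : Fin f, i < j →
        ∃ (n : ℕ) (φ : MvPolynomial (Fin n) B ≃+* Localization.Away (mkQ (xvt R₀ f i j))),
          (∀ r : R₀, φ (MvPolynomial.C (algebraMap (Polynomial R₀) B (Polynomial.C r))) =
              algebraMap Q _ (mkQ (MvPolynomial.C r))) ∧
          φ (MvPolynomial.C (algebraMap (Polynomial R₀) B Polynomial.X)) =
            algebraMap Q _ (mkQ (xvt R₀ f i j))) ∧
      (∃ (φ : MvPolynomial (S1ty f) B ≃+*
            Localization.Away (mkQ (xvt R₀ f ⟨0, by omega⟩ ⟨1, by omega⟩))),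
        (∀ r : R₀, φ (MvPolynomial.C (algebraMap (Polynomial R₀) B (Polynomial.C r))) =
            algebraMap Q _ (mkQ (MvPolynomial.C r))) ∧
        (φ (MvPolynomial.C (algebraMap (Polynomial R₀) B Polynomial.X)) =
            algebraMap Q _ (mkQ (xvt R₀ f ⟨0, by omega⟩ ⟨1, by omega⟩))) ∧
        (∀ j : {j : Fin f // 2 ≤ (j : ℕ)},
          φ (MvPolynomial.X (0, j)) = algebraMap Q _ (mkQ (xvt R₀ f ⟨0, by omega⟩ j.1)) ∧
          φ (MvPolynomial.X (1, j)) = algebraMap Q _ (mkQ (xvt R₀ f ⟨1, by omega⟩ j.1)) ∧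
          φ (MvPolynomial.X (2, j)) = algebraMap Q _ (mkQ (tvt R₀ f j.1)))) := by

  constructor
  · intro i j hij
    obtain ⟨φ0, h1, h2, h3⟩ := main R₀ f i j hij
    refine ⟨Fintype.card (Vv f i j),
      ((MvPolynomial.renameEquiv (Bb R₀) (Fintype.equivFin (Vv f i j)).symm).toRingEquiv).trans
        φ0, fun r => ?_, ?_⟩
    · rw [RingEquiv.trans_apply, renameEquiv_ringEquiv_apply, MvPolynomial.rename_C]
      exact h1 r
    · rw [RingEquiv.trans_apply, renameEquiv_ringEquiv_apply, MvPolynomial.rename_C]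
      exact h2
  · have h01 : (⟨0, by omega⟩ : Fin f) < ⟨1, by omega⟩ := by
      simp [Fin.mk_lt_mk]
    obtain ⟨φ0, h1, h2, h3⟩ := main R₀ f ⟨0, by omega⟩ ⟨1, by omega⟩ h01
    let e2 : {j : Fin f // 2 ≤ (j : ℕ)} ≃
        {j : Fin f // j ≠ (⟨0, by omega⟩ : Fin f) ∧ j ≠ (⟨1, by omega⟩ : Fin f)} :=
      Equiv.subtypeEquivRight (fun j => by
        simp only [ne_eq, Fin.ext_iff]
        omega)
    refine ⟨((MvPolynomial.renameEquiv (Bb R₀)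
        ((Equiv.refl (Fin 3)).prodCongr e2)).toRingEquiv).trans φ0,
      fun r => ?_, ?_, fun j => ⟨?_, ?_, ?_⟩⟩
    · rw [RingEquiv.trans_apply, renameEquiv_ringEquiv_apply, MvPolynomial.rename_C]
      exact h1 r
    · rw [RingEquiv.trans_apply, renameEquiv_ringEquiv_apply, MvPolynomial.rename_C]
      exact h2
    · rw [RingEquiv.trans_apply, renameEquiv_ringEquiv_apply, MvPolynomial.rename_X]
      exact (h3 (e2 j)).1
    · rw [RingEquiv.trans_apply, renameEquiv_ringEquiv_apply, MvPolynomial.rename_X]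
      exact (h3 (e2 j)).2.1
    · rw [RingEquiv.trans_apply, renameEquiv_ringEquiv_apply, MvPolynomial.rename_X]
      exact (h3 (e2 j)).2.2


end AluffiStmt
end
end
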